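/- For λ > 0, 2λ ∫₀^1 r e^{-λπ r²} dr + 2λ ∫₁^∞ (1/r) e^{-πλ r²} dr = (1/π)(1 - e^{-λπ}) - λ Ei(-λπ), where Ei is the exponential integral. Consequently the average received power density in the SAN equals (2 G_m λ₂ P_tc / tan²(t_m/2)) · [1 - e^{-λ₂π} - λ₂π Ei(-λ₂π)] up to the stated normalization. -/

import Mathlib

/-!
On `(0, 1]` the integrand `r e^{-c r²}` has the elementary antiderivative `-e^{-c r²} / (2c)`.
On `(1, ∞)` the substitution `t = c r²` gives `dt / t = 2 dr / r`, turning the integral into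
`½ ∫_c^∞ e^{-t} / t dt = -½ Ei(-c)`. The second identity is the first one multiplied by
`2 G_m λ P_tc π / tan²(t_m/2)`.
-/

open MeasureTheory Real Set

/-- The exponential integral `Ei x = -∫_{-x}^∞ e^{-t}/t dt`. -/
noncomputable def Ei (x : ℝ) : ℝ := -∫ t in Set.Ioi (-x), Real.exp (-t) / t

theorem integral_mul_exp_neg_mul_sq {c : ℝ} (hc : c ≠ 0) (b : ℝ) :
    ∫ r in (0 : ℝ)..b, r * exp (-(c * r ^ 2)) = (1 - exp (-(c * b ^ 2))) / (2 * c) := by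
  have hderiv (x : ℝ) :
      HasDerivAt (fun r => -exp (-(c * r ^ 2)) / (2 * c)) (x * exp (-(c * x ^ 2))) x := by
    refine (((hasDerivAt_pow 2 x).const_mul c).fun_neg.exp.fun_neg.div_const (2 * c)).congr_deriv ?_
    field_simp
    norm_num [mul_comm]
  rw [intervalIntegral.integral_eq_sub_of_hasDerivAt (fun x _ => hderiv x)
    ((by fun_prop : Continuous fun r => r * exp (-(c * r ^ 2))).intervalIntegrable 0 b)]
  simp only [ne_eq, OfNat.ofNat_ne_zero, not_false_eq_true, zero_pow, mul_zero, neg_zero, exp_zero]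
  ring

theorem image_const_mul_sq_Ioi {a c : ℝ} (ha : 0 ≤ a) (hc : 0 < c) :
    (fun x => c * x ^ 2) '' Ioi a = Ioi (c * a ^ 2) := by
  ext t
  constructor
  · rintro ⟨x, hx, rfl⟩
    exact mul_lt_mul_of_pos_left (pow_lt_pow_left₀ hx ha two_ne_zero) hc
  · intro ht
    have hta : a ^ 2 < t / c := by rwa [lt_div_iff₀' hc]
    refine ⟨√(t / c), lt_sqrt_of_sq_lt hta, ?_⟩
    show c * √(t / c) ^ 2 = t
    rw [sq_sqrt (by nlinarith [sq_nonneg a]), mul_div_cancel₀ _ hc.ne']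

theorem integral_Ioi_inv_mul_exp_neg_mul_sq {a c : ℝ} (ha : 0 ≤ a) (hc : 0 < c) :
    ∫ r in Ioi a, r⁻¹ * exp (-(c * r ^ 2)) = (1 / 2) * ∫ t in Ioi (c * a ^ 2), exp (-t) / t := by
  have hinj : InjOn (fun x => c * x ^ 2) (Ioi a) := fun x hx y hy hxy =>
    (sq_eq_sq₀ (ha.trans hx.le) (ha.trans hy.le)).1 (mul_left_cancel₀ hc.ne' hxy)
  rw [← image_const_mul_sq_Ioi ha hc, integral_image_eq_integral_abs_deriv_smul measurableSet_Ioi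
    (fun x _ => ((hasDerivAt_pow 2 x).const_mul c).hasDerivWithinAt) hinj,
    ← integral_const_mul]
  refine setIntegral_congr_fun measurableSet_Ioi fun x (hx : a < x) => ?_
  have hx0 : 0 < x := ha.trans_lt hx
  rw [smul_eq_mul, abs_of_pos (by positivity)]
  field_simp
  norm_num [mul_comm]

theorem integral_Ioc_mul_exp_add_integral_Ioi_inv_mul_exp {lam : ℝ} (hlam : 0 < lam) :
    (2 * lam * ∫ r in Ioc (0 : ℝ) 1, r * exp (-(lam * π * r ^ 2)))
        + 2 * lam * (∫ r in Ioi (1 : ℝ), r⁻¹ * exp (-(π * lam * r ^ 2)))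
      = (1 / π) * (1 - exp (-(lam * π))) - lam * Ei (-(lam * π)) := by
  have hlampi : 0 < lam * π := by positivity
  rw [← intervalIntegral.integral_of_le zero_le_one, integral_mul_exp_neg_mul_sq hlampi.ne',
    mul_comm π, integral_Ioi_inv_mul_exp_neg_mul_sq zero_le_one hlampi, Ei, neg_neg]
  field_simp
  ring

theorem stmt_12_general (lam Gm Ptc tm : ℝ) (hlam : 0 < lam) :
    (2 * lam * ∫ r in Set.Ioc (0 : ℝ) 1, r * Real.exp (-(lam * π * r ^ 2)))
        + 2 * lam * (∫ r in Set.Ioi (1 : ℝ), r⁻¹ * Real.exp (-(π * lam * r ^ 2)))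
      = (1 / π) * (1 - Real.exp (-(lam * π))) - lam * Ei (-(lam * π)) ∧
    2 * Gm * lam * Ptc / Real.tan (tm / 2) ^ 2 *
        (1 - Real.exp (-(lam * π)) - lam * π * Ei (-(lam * π)))
      = 2 * Gm * lam * Ptc * π / Real.tan (tm / 2) ^ 2 *
        ((2 * lam * ∫ r in Set.Ioc (0 : ℝ) 1, r * Real.exp (-(lam * π * r ^ 2)))
          + 2 * lam * ∫ r in Set.Ioi (1 : ℝ), r⁻¹ * Real.exp (-(π * lam * r ^ 2))) := by
  have hsum := integral_Ioc_mul_exp_add_integral_Ioi_inv_mul_exp hlam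
  refine ⟨hsum, ?_⟩
  rw [hsum]
  field_simp

/-- The average received charging power density computation of Proposition 2:
`2λ∫₀^1 r e^{-λπr²} dr + 2λ∫₁^∞ (1/r) e^{-πλr²} dr = (1/π)(1 - e^{-λπ}) - λ Ei(-λπ)`,
and consequently the density `(2 G_m λ₂ P_tc / tan²(t_m/2))·[1 - e^{-λ₂π} - λ₂π Ei(-λ₂π)]`
equals the integral expression up to the stated normalization. -/
theorem stmt_12 (lam Gm Ptc tm : ℝ) (hlam : 0 < lam) (hGm : 0 < Gm) (hP : 0 < Ptc)
    (htm : Real.tan (tm / 2) ≠ 0) :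
    (2 * lam * ∫ r in Set.Ioc (0 : ℝ) 1, r * Real.exp (-(lam * π * r ^ 2)))
        + 2 * lam * (∫ r in Set.Ioi (1 : ℝ), r⁻¹ * Real.exp (-(π * lam * r ^ 2)))
      = (1 / π) * (1 - Real.exp (-(lam * π))) - lam * Ei (-(lam * π)) ∧
    2 * Gm * lam * Ptc / Real.tan (tm / 2) ^ 2 *
        (1 - Real.exp (-(lam * π)) - lam * π * Ei (-(lam * π)))
      = 2 * Gm * lam * Ptc * π / Real.tan (tm / 2) ^ 2 *
        ((2 * lam * ∫ r in Set.Ioc (0 : ℝ) 1, r * Real.exp (-(lam * π * r ^ 2)))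
          + 2 * lam * ∫ r in Set.Ioi (1 : ℝ), r⁻¹ * Real.exp (-(π * lam * r ^ 2))) :=
  stmt_12_general lam Gm Ptc tm hlam
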